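/- Pseudo-anonymous announcements cannot simulate public announcements up to bisimulation: there exists a finite epistemic model M (on 3 agents, with states t ∼_{ac} s ∼_{bc} u, where p holds only at s) and a public announcement p! such that no pseudo-anonymous announcement φ⟡ applied to M yields a model bisimilar to M^{p!} (the single p-state model). In particular, no pseudo-anonymous update of M can remove all ¬p-states. -/

import Mathlib

/-- An epistemic (Kripke) model over agent set `Agt` and state set `St`. -/
structure Model (Agt : Type) (St : Type) where
  rel : Agt → St → St → Prop
  val : ℕ → St → Prop

/-- The model is an epistemic model proper: each agent's relation is an equivalence. -/
def isEquivModel {Agt St : Type} (M : Model Agt St) : Prop :=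
  ∀ a, Equivalence (M.rel a)

/-- Formulas: atoms, ⊥, →, ∧, K_a, ▲ (safety), [φ⟡]ψ (pseudo-anonymous announcement),
    [φ⟡!]ψ (safe/intentional anonymous announcement). -/
inductive Form (Agt : Type) : Type where
  | atom : ℕ → Form Agt
  | bot  : Form Agt
  | imp  : Form Agt → Form Agt → Form Agt
  | and  : Form Agt → Form Agt → Form Agt
  | K    : Agt → Form Agt → Form Agt
  | tri  : Form Agt → Form Agt
  | annA : Form Agt → Form Agt → Form Agt
  | annS : Form Agt → Form Agt → Form Agt

def Form.neg {Agt : Type} (φ : Form Agt) : Form Agt := .imp φ .bot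

/-- One step of the safety operator: `⋁_{G ∈ N³} E_G (P ∧ X)`. -/
def fsafe {Agt St : Type} (M : Model Agt St) (P X : St → Prop) (s : St) : Prop :=
  ∃ G : Finset Agt, G.card = 3 ∧ ∀ a ∈ G, ∀ t, M.rel a s t → P t ∧ X t

/-- `▲P` semantically: greatest fixpoint of `fsafe M P`, i.e. union of post-fixed points. -/
def triSem {Agt St : Type} (M : Model Agt St) (P : St → Prop) (s : St) : Prop :=
  ∃ X : St → Prop, X s ∧ ∀ t, X t → fsafe M P X t

/-- Product update of `M` with an action model whose events are `E`, relation `arel`, and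
    (semantic) preconditions `pre`.  States not satisfying the precondition are cut off
    from the relation (this encodes the restriction to legal states). -/
def prodUpd {Agt St E : Type} (M : Model Agt St) (arel : Agt → E → E → Prop)
    (pre : E → St → Prop) : Model Agt (St × E) where
  rel c p q := pre p.2 p.1 ∧ pre q.2 q.1 ∧ M.rel c p.1 q.1 ∧ arel c p.2 q.2
  val n p := M.val n p.1

/-- Action relation of the pseudo-anonymous action model: `a ∼_c b` iff `(a = c ↔ b = c)`. -/
def anonRel {Agt : Type} (c a b : Agt) : Prop := (a = c ↔ b = c)

/-- The pseudo-anonymous style update `M^{φ⟡}` (with precondition `pre a`). -/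
def updA {Agt St : Type} (M : Model Agt St) (pre : Agt → St → Prop) : Model Agt (St × Agt) :=
  prodUpd M anonRel pre

/-- Satisfaction. -/
def Sat {Agt : Type} : {St : Type} → Model Agt St → St → Form Agt → Prop
  | _, M, s, .atom n => M.val n s
  | _, _, _, .bot => False
  | _, M, s, .imp φ ψ => Sat M s φ → Sat M s ψ
  | _, M, s, .and φ ψ => Sat M s φ ∧ Sat M s ψ
  | _, M, s, .K a φ => ∀ t, M.rel a s t → Sat M t φ
  | _, M, s, .tri φ => triSem M (fun t => Sat M t φ) s
  | _, M, s, .annA φ ψ => ∀ a, (∀ t, M.rel a s t → Sat M t φ) →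
      Sat (updA M (fun b t => ∀ u, M.rel b t u → Sat M u φ)) (s, a) ψ
  | _, M, s, .annS φ ψ => ∀ a, (∀ t, M.rel a s t → triSem M (fun u => Sat M u φ) t) →
      Sat (updA M (fun b t => ∀ u, M.rel b t u → triSem M (fun v => Sat M v φ) u)) (s, a) ψ

/-- The pseudo-anonymous update `M^{φ⟡}`. -/
def updAnn {Agt St : Type} (M : Model Agt St) (φ : Form Agt) : Model Agt (St × Agt) :=
  updA M (fun b t => ∀ u, M.rel b t u → Sat M u φ)

/-- The safe (intentional) anonymous update `M^{φ⟡!}`. -/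
def updSafe {Agt St : Type} (M : Model Agt St) (φ : Form Agt) : Model Agt (St × Agt) :=
  updA M (fun b t => ∀ u, M.rel b t u → triSem M (fun v => Sat M v φ) u)

/-- Public announcement update: restriction of `M` to `P` (encoded by cutting the relation). -/
def restrict {Agt St : Type} (M : Model Agt St) (P : St → Prop) : Model Agt St where
  rel a x y := P x ∧ P y ∧ M.rel a x y
  val := M.val

/-- Iterative approximations `▲_n`. -/
def triN {Agt St : Type} (M : Model Agt St) (P : St → Prop) : ℕ → St → Prop
  | 0 => P
  | n + 1 => fun s => P s ∧ ∃ G : Finset Agt, G.card = 3 ∧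
      ∀ a ∈ G, ∀ t, M.rel a s t → triN M P n t

/-- Standard bisimulation between two models. -/
structure Bisim {Agt St₁ St₂ : Type} (M₁ : Model Agt St₁) (M₂ : Model Agt St₂)
    (Z : St₁ → St₂ → Prop) : Prop where
  atoms : ∀ s t, Z s t → ∀ n, (M₁.val n s ↔ M₂.val n t)
  forth : ∀ s t, Z s t → ∀ a u, M₁.rel a s u → ∃ v, M₂.rel a t v ∧ Z u v
  back  : ∀ s t, Z s t → ∀ a v, M₂.rel a t v → ∃ u, M₁.rel a s u ∧ Z u v

/-- `f` is a group assignment function for `M`. -/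
def GroupAssign {Agt St : Type} (M : Model Agt St) (f : St → Finset Agt) : Prop :=
  (∀ t, f t = ∅ ∨ (f t).card = 3) ∧
  (∀ t t' i, i ∈ f t → M.rel i t t' → f t' ≠ ∅)

/-- `σ : Fin (m+1) → St` is an `f`-consistent path. -/
def FPath {Agt St : Type} (M : Model Agt St) (f : St → Finset Agt) (m : ℕ)
    (σ : Fin (m + 1) → St) : Prop :=
  ∀ k : Fin m, ∃ a ∈ f (σ k.castSucc), M.rel a (σ k.castSucc) (σ k.succ)

/-- The model of Figure 3: agents `a = 0, b = 1, c = 2`; states `t = 0, s = 1, u = 2`;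
`t ∼_{ac} s ∼_{bc} u`; `p` (atom 0) holds only at `s`. -/
def M1 : Model (Fin 3) (Fin 3) where
  rel a x y :=
    match a with
    | 0 => x = y ∨ (x ≠ 2 ∧ y ≠ 2)
    | 1 => x = y ∨ (x ≠ 0 ∧ y ≠ 0)
    | 2 => True
  val n x := n = 0 ∧ x = 1

/-- The public-announcement update `M1^{p!}`: a single state satisfying exactly `p`. -/
def Mp : Model (Fin 3) Unit where
  rel _ _ _ := True
  val n _ := n = 0

/-!
Every agent's class of every state of `M1` contains a `¬p`-state. If the precondition `K_i φ`
of the event `i` holds at `s`, it holds throughout the `i`-class of `s` (by transitivity), so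
`(s, i)` sees some `(t, i)` with `¬p` in `M1^{φ⟡}`; the forth clause then carries this
`¬p`-state to the single `p`-state of `M1^{p!}`.
-/

section Transitivity

variable {Agt St : Type} {M : Model Agt St} {φ : Form Agt} {i : Agt} {s t : St}

theorem sat_K_of_rel (htrans : IsTrans St (M.rel i)) (hK : Sat M s (.K i φ))
    (hst : M.rel i s t) : Sat M t (.K i φ) :=
  fun _ htu => hK _ (htrans.trans _ _ _ hst htu)

theorem updAnn_rel_of_rel (htrans : IsTrans St (M.rel i)) (hK : Sat M s (.K i φ))
    (hst : M.rel i s t) : (updAnn M φ).rel i (s, i) (t, i) :=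
  ⟨hK, sat_K_of_rel htrans hK hst, hst, Iff.rfl⟩

variable {n : ℕ}

theorem exists_sat_K_not_val (htrans : ∀ j, IsTrans St (M.rel j))
    (hcls : ∀ j s, ∃ t, M.rel j s t ∧ ¬ M.val n t) (hK : Sat M s (.K i φ)) :
    ∃ t, Sat M t (.K i φ) ∧ ¬ M.val n t :=
  let ⟨t, hst, hnt⟩ := hcls i s
  ⟨t, sat_K_of_rel (htrans i) hK hst, hnt⟩

theorem not_bisim_updAnn {St₂ : Type} {M₂ : Model Agt St₂} {Z : St × Agt → St₂ → Prop}
    (htrans : ∀ j, IsTrans St (M.rel j)) (hcls : ∀ j s, ∃ t, M.rel j s t ∧ ¬ M.val n t)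
    (hval : ∀ v, M₂.val n v) (hserial : ∀ u, ∃ a v, M₂.rel a u v)
    (hB : Bisim (updAnn M φ) M₂ Z) (x : St × Agt) (u : St₂) : ¬ Z x u := by
  intro hZ
  obtain ⟨a, v, huv⟩ := hserial u
  obtain ⟨y, hxy, -⟩ := hB.back x u hZ a v huv
  have hK : Sat M x.1 (.K x.2 φ) := hxy.1
  obtain ⟨t, hxt, hnt⟩ := hcls x.2 x.1
  obtain ⟨v', -, hZ'⟩ := hB.forth x u hZ x.2 (t, x.2) (updAnn_rel_of_rel (htrans _) hK hxt)
  exact hnt ((hB.atoms _ _ hZ' n).2 (hval v'))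

end Transitivity

theorem M1_equiv : isEquivModel M1 := by
  intro a
  refine ⟨fun x => ?_, fun {x y} h => ?_, fun {x y z} h1 h2 => ?_⟩
  · fin_cases a <;> simp [M1]
  · fin_cases a <;> fin_cases x <;> fin_cases y <;> simp_all [M1]
  · fin_cases a <;> fin_cases x <;> fin_cases y <;> fin_cases z <;> simp_all [M1]

theorem M1_exists_rel_not_val (i s : Fin 3) : ∃ t, M1.rel i s t ∧ ¬ M1.val 0 t := by
  by_cases hs : s = 1
  · subst hs
    refine ⟨if i = 1 then 2 else 0, ?_, ?_⟩ <;> fin_cases i <;> simp [M1]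
  · exact ⟨s, (M1_equiv i).refl s, fun h => hs h.2⟩

theorem stmt1 :
    isEquivModel M1 ∧
    (∀ φ : Form (Fin 3),
      ¬ ∃ Z : (Fin 3 × Fin 3) → Unit → Prop,
          (∃ x y, Z x y) ∧ Bisim (updAnn M1 φ) Mp Z) ∧
    (∀ φ : Form (Fin 3),
      (∃ w i, Sat M1 w (.K i φ)) →
        ∃ w' i', Sat M1 w' (.K i' φ) ∧ ¬ Sat M1 w' (.atom 0)) := by
  have htrans : ∀ j, IsTrans (Fin 3) (M1.rel j) := fun j => ⟨fun _ _ _ => (M1_equiv j).trans⟩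
  refine ⟨M1_equiv, ?_, ?_⟩
  · rintro φ ⟨Z, ⟨x, u, hZ⟩, hB⟩
    exact not_bisim_updAnn htrans M1_exists_rel_not_val (fun _ => rfl)
      (fun _ => ⟨0, (), trivial⟩) hB x u hZ
  · rintro φ ⟨w, i, hK⟩
    obtain ⟨t, htK, hnt⟩ := exists_sat_K_not_val htrans M1_exists_rel_not_val hK
    exact ⟨t, i, htK, hnt⟩
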